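/- arXiv:1501.02283 — 5 statements merged into one kernel-verified Lean document; each statement's English description precedes it below -/
import Mathlib

section
/- (Theorem 4.1) Let α : ℝ → ℝ⁴ be smooth and let V₁, V₂, V₃, V₄ : ℝ → ℝ⁴ be smooth maps forming, at every σ, a linearly independent family, with continuous functions 𝒦₁, 𝒦₂, 𝒦₃ : ℝ → ℝ and signs μ₁,…,μ₅ ∈ {-1,1}, such that α' = V₁ and the equiform Frenet equations hold: V₁' = 𝒦₁V₁ + V₂, V₂' = μ₁V₁ + 𝒦₁V₂ + μ₂𝒦₂V₃, V₃' = μ₃𝒦₂V₂ + 𝒦₁V₃ + μ₄𝒦₃V₄, V₄' = μ₅𝒦₃V₃ + 𝒦₁V₄. Assume 𝒦₁(σ) ≠ 0 for all σ. Then 𝒦₂ ≡ 0 if and only if α lies fully in a 2-dimensional plane of E₁⁴, i.e. there exists a 2-dimensional linear subspace W ⊆ ℝ⁴ such that α(σ) - α(0) ∈ W for all σ. -/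
/-!
Along the curve, `(V₁, V₂)` solves a linear system whose only coupling to `V₃` is the term
`μ₂ 𝒦₂ V₃` in `V₂'`. If `𝒦₂ ≡ 0` the system closes up, so every linear functional vanishing on
`V₁(0)` and `V₂(0)` vanishes on `V₁` and `V₂` for all time by uniqueness for linear ODEs (Grönwall);
since `α' = V₁`, the curve stays in the plane `α(0) + span {V₁(0), V₂(0)}`. Conversely, if `α`
stays in a plane `W`, differentiating shows `V₁, V₂ ∈ W` and then `μ₂ 𝒦₂ V₃ ∈ W`; if `𝒦₂(σ) ≠ 0`
this puts three independent vectors in the 2-dimensional `W`.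
-/

noncomputable section

/-- The Minkowski bilinear form on ℝ⁴ with signature (-,+,+,+). -/
def B (x y : Fin 4 → ℝ) : ℝ :=
  -(x 0 * y 0) + x 1 * y 1 + x 2 * y 2 + x 3 * y 3

open Set Submodule

section Curves

variable {E F : Type*} [NormedAddCommGroup E] [NormedSpace ℝ E]
  [NormedAddCommGroup F] [NormedSpace ℝ F]

theorem linear_ODE_solution_eq_zero {A : ℝ → F →L[ℝ] F} (hA : Continuous A) {f : ℝ → F}
    (hf : ∀ t, HasDerivAt f (A t (f t)) t) {t₀ : ℝ} (hf₀ : f t₀ = 0) : f = 0 := by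
  funext t
  obtain ⟨a, b, ht, ht₀⟩ : ∃ a b, t ∈ Ioo a b ∧ t₀ ∈ Ioo a b :=
    ⟨min t t₀ - 1, max t t₀ + 1, by grind⟩
  obtain ⟨M, hM⟩ := isCompact_Icc.exists_bound_of_continuousOn (hA.continuousOn (s := Icc a b))
  refine ODE_solution_unique_of_mem_Ioo (v := fun s x => A s x) (s := fun _ => univ)
    (K := M.toNNReal) (fun s hs => ((A s).lipschitz.weaken ?_).lipschitzOnWith) ht₀
    (fun s _ => ⟨hf s, trivial⟩) (fun s _ => ⟨by simp, trivial⟩) hf₀ ht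
  rw [← NNReal.coe_le_coe, coe_nnnorm, Real.coe_toNNReal']
  exact (hM s (Ioo_subset_Icc_self hs)).trans (le_max_left _ _)

theorem frenet_pair_apply_eq_zero (φ : E →L[ℝ] F) {k : ℝ → ℝ} (hk : Continuous k) (m : ℝ)
    {U V : ℝ → E} (hU : ∀ t, HasDerivAt U (k t • U t + V t) t)
    (hV : ∀ t, HasDerivAt V (m • U t + k t • V t) t) {t₀ : ℝ}
    (hU₀ : φ (U t₀) = 0) (hV₀ : φ (V t₀) = 0) (t : ℝ) : φ (U t) = 0 := by
  let N : F × F →L[ℝ] F × F :=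
    (ContinuousLinearMap.snd ℝ F F).prod (m • ContinuousLinearMap.fst ℝ F F)
  have hpair : (fun s => (φ (U s), φ (V s))) = 0 := by
    refine linear_ODE_solution_eq_zero (A := fun s => k s • ContinuousLinearMap.id ℝ (F × F) + N)
      (by fun_prop) (fun s => ?_) (t₀ := t₀) (by simp [hU₀, hV₀])
    refine ((φ.hasFDerivAt.comp_hasDerivAt s (hU s)).prodMk
      (φ.hasFDerivAt.comp_hasDerivAt s (hV s))).congr_deriv ?_
    ext <;> simp [N, add_comm]
  exact congrArg Prod.fst (congrFun hpair t)

theorem sub_mem_span_of_frenet_pair [FiniteDimensional ℝ E] {k : ℝ → ℝ} (hk : Continuous k)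
    (m : ℝ) {γ U V : ℝ → E} (hγ : ∀ t, HasDerivAt γ (U t) t)
    (hU : ∀ t, HasDerivAt U (k t • U t + V t) t)
    (hV : ∀ t, HasDerivAt V (m • U t + k t • V t) t) (t₀ t : ℝ) :
    γ t - γ t₀ ∈ span ℝ (range ![U t₀, V t₀]) := by
  rw [← Subspace.forall_mem_dualAnnihilator_apply_eq_zero_iff]
  intro φ hφ
  let Φ := LinearMap.toContinuousLinearMap φ
  have hΦ₀ (i : Fin 2) : Φ (![U t₀, V t₀] i) = 0 :=
    (mem_dualAnnihilator φ).mp hφ _ (subset_span ⟨i, rfl⟩)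
  have hΦU : ∀ s, Φ (U s) = 0 := frenet_pair_apply_eq_zero Φ hk m hU hV (hΦ₀ 0) (hΦ₀ 1)
  have hΦγ : ∀ s, HasDerivAt (fun s => Φ (γ s)) 0 s := fun s =>
    hΦU s ▸ Φ.hasFDerivAt.comp_hasDerivAt s (hγ s)
  change Φ (γ t - γ t₀) = 0
  rw [map_sub, sub_eq_zero]
  exact is_const_of_deriv_eq_zero (fun s => (hΦγ s).differentiableAt)
    (fun s => (hΦγ s).deriv) t t₀

theorem mem_of_hasDerivAt_of_forall_mem {W : Submodule ℝ E} (hW : IsClosed (W : Set E))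
    {f : ℝ → E} {f' : E} {t : ℝ} (hf : HasDerivAt f f' t) (hfW : ∀ s, f s ∈ W) : f' ∈ W :=
  hW.mem_of_tendsto (hasDerivAt_iff_tendsto_slope.mp hf) <| Filter.Eventually.of_forall
    fun s => W.smul_mem _ (W.sub_mem (hfW s) (hfW t))

theorem frenet_mem_of_sub_mem {W : Submodule ℝ E} (hW : IsClosed (W : Set E))
    {k c : ℝ → ℝ} {m : ℝ} {γ U V X : ℝ → E} (hγ : ∀ t, HasDerivAt γ (U t) t)
    (hU : ∀ t, HasDerivAt U (k t • U t + V t) t)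
    (hV : ∀ t, HasDerivAt V (m • U t + k t • V t + c t • X t) t) {t₀ : ℝ}
    (hγW : ∀ t, γ t - γ t₀ ∈ W) (t : ℝ) : U t ∈ W ∧ V t ∈ W ∧ c t • X t ∈ W := by
  have hUW (s : ℝ) : U s ∈ W :=
    mem_of_hasDerivAt_of_forall_mem hW ((hγ s).sub_const (γ t₀)) hγW
  have hVW (s : ℝ) : V s ∈ W := by
    simpa using W.sub_mem (mem_of_hasDerivAt_of_forall_mem hW (hU s) hUW) (W.smul_mem (k s) (hUW s))
  refine ⟨hUW t, hVW t, ?_⟩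
  convert W.sub_mem (mem_of_hasDerivAt_of_forall_mem hW (hV t) hVW)
    (W.add_mem (W.smul_mem m (hUW t)) (W.smul_mem (k t) (hVW t))) using 1
  abel

end Curves

theorem LinearIndependent.card_le_finrank_of_forall_mem {K M ι : Type*} [DivisionRing K]
    [AddCommGroup M] [Module K M] [Module.Finite K M] [Fintype ι] {v : ι → M}
    (hv : LinearIndependent K v) {W : Submodule K M} (hvW : ∀ i, v i ∈ W) :
    Fintype.card ι ≤ Module.finrank K W := by
  rw [← finrank_span_eq_card hv]
  exact Submodule.finrank_mono (span_le.mpr (range_subset_iff.mpr hvW))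

theorem spacelike_K₂_zero_iff_planar_general
    (α V₁ V₂ V₃ V₄ : ℝ → Fin 4 → ℝ) (K₁ K₂ : ℝ → ℝ)
    (μ₁ μ₂ : ℝ)
    (hμ₂ : μ₂ = -1 ∨ μ₂ = 1)
    (hα : ContDiff ℝ (⊤ : ℕ∞) α)
    (hV₁ : ContDiff ℝ (⊤ : ℕ∞) V₁) (hV₂ : ContDiff ℝ (⊤ : ℕ∞) V₂)
    (hindep : ∀ σ, LinearIndependent ℝ ![V₁ σ, V₂ σ, V₃ σ, V₄ σ])
    (hK₁c : Continuous K₁)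
    (hα' : ∀ σ, deriv α σ = V₁ σ)
    (hV₁' : ∀ σ, deriv V₁ σ = K₁ σ • V₁ σ + V₂ σ)
    (hV₂' : ∀ σ, deriv V₂ σ = μ₁ • V₁ σ + K₁ σ • V₂ σ + (μ₂ * K₂ σ) • V₃ σ) :
    (∀ σ, K₂ σ = 0) ↔
      ∃ W : Submodule ℝ (Fin 4 → ℝ), Module.finrank ℝ W = 2 ∧
        ∀ σ, α σ - α 0 ∈ W := by
  have hd {f f' : ℝ → Fin 4 → ℝ} (hf : ContDiff ℝ (⊤ : ℕ∞) f) (hf' : ∀ σ, deriv f σ = f' σ)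
      (σ : ℝ) : HasDerivAt f (f' σ) σ :=
    hf' σ ▸ (hf.differentiable (by simp) σ).hasDerivAt
  have hli₃ (σ : ℝ) : LinearIndependent ℝ ![V₁ σ, V₂ σ, V₃ σ] := by
    convert (hindep σ).comp Fin.castSucc (Fin.castSucc_injective _) using 1
    ext i; fin_cases i <;> rfl
  constructor
  · intro hK₂
    have hli₂ : LinearIndependent ℝ ![V₁ 0, V₂ 0] := by
      convert (hli₃ 0).comp Fin.castSucc (Fin.castSucc_injective _) using 1
      ext i; fin_cases i <;> rfl
    refine ⟨span ℝ (range ![V₁ 0, V₂ 0]), by simpa using finrank_span_eq_card hli₂,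
      sub_mem_span_of_frenet_pair hK₁c μ₁ (hd hα hα') (hd hV₁ hV₁') (fun σ => ?_) 0⟩
    simpa [hK₂ σ] using hd hV₂ hV₂' σ
  · rintro ⟨W, hW, hαW⟩ σ
    by_contra hK₂σ
    obtain ⟨hV₁W, hV₂W, hV₃W⟩ := frenet_mem_of_sub_mem W.closed_of_finiteDimensional
      (hd hα hα') (hd hV₁ hV₁') (hd hV₂ hV₂') hαW σ
    have hμ₂K₂ : μ₂ * K₂ σ ≠ 0 := mul_ne_zero (by rcases hμ₂ with h | h <;> simp [h]) hK₂σ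
    have := (hli₃ σ).card_le_finrank_of_forall_mem (W := W) fun i => by
      fin_cases i
      exacts [hV₁W, hV₂W, (W.smul_mem_iff hμ₂K₂).mp hV₃W]
    simp [hW] at this

theorem spacelike_K₂_zero_iff_planar
    (α V₁ V₂ V₃ V₄ : ℝ → Fin 4 → ℝ) (K₁ K₂ K₃ : ℝ → ℝ)
    (μ₁ μ₂ μ₃ μ₄ μ₅ : ℝ)
    (hμ₁ : μ₁ = -1 ∨ μ₁ = 1) (hμ₂ : μ₂ = -1 ∨ μ₂ = 1) (hμ₃ : μ₃ = -1 ∨ μ₃ = 1)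
    (hμ₄ : μ₄ = -1 ∨ μ₄ = 1) (hμ₅ : μ₅ = -1 ∨ μ₅ = 1)
    (hα : ContDiff ℝ (⊤ : ℕ∞) α)
    (hV₁ : ContDiff ℝ (⊤ : ℕ∞) V₁) (hV₂ : ContDiff ℝ (⊤ : ℕ∞) V₂)
    (hV₃ : ContDiff ℝ (⊤ : ℕ∞) V₃) (hV₄ : ContDiff ℝ (⊤ : ℕ∞) V₄)
    (hindep : ∀ σ, LinearIndependent ℝ ![V₁ σ, V₂ σ, V₃ σ, V₄ σ])
    (hK₁c : Continuous K₁) (hK₂c : Continuous K₂) (hK₃c : Continuous K₃)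
    (hα' : ∀ σ, deriv α σ = V₁ σ)
    (hV₁' : ∀ σ, deriv V₁ σ = K₁ σ • V₁ σ + V₂ σ)
    (hV₂' : ∀ σ, deriv V₂ σ = μ₁ • V₁ σ + K₁ σ • V₂ σ + (μ₂ * K₂ σ) • V₃ σ)
    (hV₃' : ∀ σ, deriv V₃ σ = (μ₃ * K₂ σ) • V₂ σ + K₁ σ • V₃ σ + (μ₄ * K₃ σ) • V₄ σ)
    (hV₄' : ∀ σ, deriv V₄ σ = (μ₅ * K₃ σ) • V₃ σ + K₁ σ • V₄ σ)
    (hK₁ne : ∀ σ, K₁ σ ≠ 0) :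
    (∀ σ, K₂ σ = 0) ↔
      ∃ W : Submodule ℝ (Fin 4 → ℝ), Module.finrank ℝ W = 2 ∧
        ∀ σ, α σ - α 0 ∈ W :=
  spacelike_K₂_zero_iff_planar_general α V₁ V₂ V₃ V₄ K₁ K₂ μ₁ μ₂ hμ₂ hα hV₁ hV₂ hindep hK₁c hα' hV₁'
    hV₂'
end
end

section
/- (Theorem 4.2) Let α : ℝ → ℝ⁴ be smooth and let V₁, V₂, V₃, V₄ : ℝ → ℝ⁴ be smooth maps forming, at every σ, a linearly independent family, with continuous functions 𝒦₁, 𝒦₂, 𝒦₃ : ℝ → ℝ and signs μ₁,…,μ₅ ∈ {-1,1}, such that α' = V₁ and the equiform Frenet equations hold: V₁' = 𝒦₁V₁ + V₂, V₂' = μ₁V₁ + 𝒦₁V₂ + μ₂𝒦₂V₃, V₃' = μ₃𝒦₂V₂ + 𝒦₁V₃ + μ₄𝒦₃V₄, V₄' = μ₅𝒦₃V₃ + 𝒦₁V₄. Assume 𝒦₁(σ) ≠ 0 and 𝒦₂(σ) ≠ 0 for all σ. Then 𝒦₃ ≡ 0 if and only if α lies fully in a hyperplane of E₁⁴, i.e.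 there exists a nonzero vector q ∈ ℝ⁴ such that B(α(σ) - α(0), q) = 0 for all σ. -/
noncomputable section

/-!
Write `fᵢ = B(Vᵢ, q)`. Differentiating `B(α - α(0), q)` gives `f₁`, and the equiform Frenet
equations make `(f₁, f₂, f₃)` solve `f₁' = 𝒦₁f₁ + f₂`, `f₂' = μ₁f₁ + 𝒦₁f₂ + μ₂𝒦₂f₃`,
`f₃' = μ₃𝒦₂f₂ + 𝒦₁f₃ + μ₄𝒦₃f₄`.

If `𝒦₃ ≡ 0` this is a linear ODE in `(f₁, f₂, f₃)` alone, so choosing `q ≠ 0` with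
`f₁(0) = f₂(0) = f₃(0) = 0` (three conditions in dimension four) forces `f₁ ≡ 0` by uniqueness
of solutions, and `α` stays in the hyperplane `B(· - α(0), q) = 0`.

Conversely, if `B(α - α(0), q) ≡ 0` then successively `f₁ ≡ f₂ ≡ f₃ ≡ 0` (using `𝒦₂ ≠ 0`),
hence `𝒦₃ f₄ ≡ 0`; where `𝒦₃ ≠ 0`, `q` would be `B`-orthogonal to the basis `V₁, …, V₄`,
so `q = 0` as `B` is nondegenerate.
-/

open Set Matrix

theorem eq_zero_of_hasDerivAt_clm_apply {E : Type*} [NormedAddCommGroup E] [NormedSpace ℝ E]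
    {A : ℝ → E →L[ℝ] E} (hA : Continuous A) {f : ℝ → E}
    (hf : ∀ t, HasDerivAt f (A t (f t)) t) (h₀ : f 0 = 0) (t : ℝ) : f t = 0 := by
  obtain ⟨a, b, ht, h₀ab⟩ : ∃ a b : ℝ, t ∈ Ioo a b ∧ (0 : ℝ) ∈ Ioo a b :=
    ⟨-|t| - 1, |t| + 1, by constructor <;> cases abs_cases t <;> linarith,
      by constructor <;> linarith [abs_nonneg t]⟩
  obtain ⟨K, hK⟩ := (isCompact_Icc (a := a) (b := b)).image hA.nnnorm |>.bddAbove
  have hlip : ∀ s ∈ Ioo a b, LipschitzOnWith K (A s) univ := fun s hs =>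
    ((A s).lipschitz.weaken (hK ⟨s, Ioo_subset_Icc_self hs, rfl⟩)).lipschitzOnWith
  exact ODE_solution_unique_of_mem_Ioo (g := fun _ => 0) hlip h₀ab
    (fun s _ => ⟨hf s, mem_univ _⟩)
    (fun s _ => ⟨by simpa using hasDerivAt_const s (0 : E), mem_univ _⟩) h₀ ht

theorem Matrix.eq_zero_of_hasDerivAt_mulVec {n : Type*} [Fintype n] [DecidableEq n]
    {M : ℝ → Matrix n n ℝ} (hM : Continuous M) {f : ℝ → n → ℝ}
    (hf : ∀ t, HasDerivAt f (M t *ᵥ f t) t) (h₀ : f 0 = 0) (t : ℝ) : f t = 0 := by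
  let L : Matrix n n ℝ →ₗ[ℝ] (n → ℝ) →L[ℝ] (n → ℝ) :=
    LinearMap.toContinuousLinearMap.toLinearMap ∘ₗ Matrix.toLin'.toLinearMap
  exact eq_zero_of_hasDerivAt_clm_apply (A := fun t => L (M t))
    (L.continuous_of_finiteDimensional.comp hM) (by simpa [L] using hf) h₀ t

theorem frenet_system_eq_zero {f₁ f₂ f₃ k₁ k₂ : ℝ → ℝ} {m₁ m₂ m₃ : ℝ}
    (hk₁ : Continuous k₁) (hk₂ : Continuous k₂)
    (hf₁ : ∀ t, HasDerivAt f₁ (k₁ t * f₁ t + f₂ t) t)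
    (hf₂ : ∀ t, HasDerivAt f₂ (m₁ * f₁ t + k₁ t * f₂ t + m₂ * k₂ t * f₃ t) t)
    (hf₃ : ∀ t, HasDerivAt f₃ (m₃ * k₂ t * f₂ t + k₁ t * f₃ t) t)
    (h₁ : f₁ 0 = 0) (h₂ : f₂ 0 = 0) (h₃ : f₃ 0 = 0) (t : ℝ) : f₁ t = 0 := by
  have hM : Continuous fun t => !![k₁ t, 1, 0; m₁, k₁ t, m₂ * k₂ t; 0, m₃ * k₂ t, k₁ t] := by
    fun_prop
  have hf : ∀ s, HasDerivAt (fun t => ![f₁ t, f₂ t, f₃ t])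
      (!![k₁ s, 1, 0; m₁, k₁ s, m₂ * k₂ s; 0, m₃ * k₂ s, k₁ s] *ᵥ ![f₁ s, f₂ s, f₃ s]) s := by
    intro s
    refine hasDerivAt_pi.2 fun i => ?_
    fin_cases i
    · simpa [mulVec, dotProduct, Fin.sum_univ_three] using hf₁ s
    · simpa [mulVec, dotProduct, Fin.sum_univ_three] using hf₂ s
    · simpa [mulVec, dotProduct, Fin.sum_univ_three] using hf₃ s
  simpa using congrFun (Matrix.eq_zero_of_hasDerivAt_mulVec hM hf (by simp [h₁, h₂, h₃]) t) 0

def Bₗ : (Fin 4 → ℝ) →ₗ[ℝ] (Fin 4 → ℝ) →ₗ[ℝ] ℝ :=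
  LinearMap.mk₂ ℝ B
    (fun _ _ _ => by simp only [B, Pi.add_apply]; ring)
    (fun _ _ _ => by simp only [B, Pi.smul_apply, smul_eq_mul]; ring)
    (fun _ _ _ => by simp only [B, Pi.add_apply]; ring)
    (fun _ _ _ => by simp only [B, Pi.smul_apply, smul_eq_mul]; ring)

@[simp] lemma Bₗ_apply (x y : Fin 4 → ℝ) : Bₗ x y = B x y := rfl

lemma B_add_left (x y q : Fin 4 → ℝ) : B (x + y) q = B x q + B y q := Bₗ.map_add₂ x y q

lemma B_smul_left (a : ℝ) (x q : Fin 4 → ℝ) : B (a • x) q = a * B x q := Bₗ.map_smul₂ a x q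

theorem exists_ne_zero_forall_B_eq_zero {n : ℕ} (hn : n < 4) (v : Fin n → Fin 4 → ℝ) :
    ∃ q ≠ 0, ∀ i, B (v i) q = 0 := by
  obtain ⟨q, hq, hq₀⟩ := Submodule.exists_mem_ne_zero_of_ne_bot <|
    LinearMap.ker_ne_bot_of_finrank_lt (f := LinearMap.pi fun i => Bₗ (v i)) (by simpa using hn)
  exact ⟨q, hq₀, fun i => congrFun hq i⟩

theorem eq_zero_of_forall_B_eq_zero {ι : Type*} {v : ι → Fin 4 → ℝ}
    (hv : Submodule.span ℝ (range v) = ⊤) {q : Fin 4 → ℝ} (hq : ∀ i, B (v i) q = 0) :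
    q = 0 := by
  have h : Bₗ.flip q = 0 := LinearMap.ext_on hv (by rintro _ ⟨i, rfl⟩; exact hq i)
  funext j
  have := LinearMap.congr_fun h (Pi.single j 1)
  fin_cases j <;> simpa [B] using this

theorem HasDerivAt.B_left {V : ℝ → Fin 4 → ℝ} {W : Fin 4 → ℝ} {σ : ℝ}
    (h : HasDerivAt V W σ) (q : Fin 4 → ℝ) : HasDerivAt (fun s => B (V s) q) (B W q) σ :=
  (LinearMap.toContinuousLinearMap (Bₗ.flip q)).hasFDerivAt.comp_hasDerivAt σ h

theorem HasDerivAt.eq_zero_of_forall_eq_zero {g : ℝ → ℝ} {d σ : ℝ} (h : HasDerivAt g d σ)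
    (hg : ∀ s, g s = 0) : d = 0 :=
  h.unique (by simpa [funext hg] using hasDerivAt_const σ (0 : ℝ))

theorem forall_B_sub_eq_zero_iff {α V : ℝ → Fin 4 → ℝ} (hα : ∀ σ, HasDerivAt α (V σ) σ)
    (q : Fin 4 → ℝ) : (∀ σ, B (α σ - α 0) q = 0) ↔ ∀ σ, B (V σ) q = 0 := by
  have hd : ∀ σ, HasDerivAt (fun s => B (α s - α 0) q) (B (V σ) q) σ :=
    fun σ => ((hα σ).sub_const (α 0)).B_left q
  refine ⟨fun h σ => (hd σ).eq_zero_of_forall_eq_zero h, fun h σ => ?_⟩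
  have := is_const_of_deriv_eq_zero (fun s => (hd s).differentiableAt)
    (fun s => (hd s).deriv.trans (h s)) σ 0
  simpa [B] using this

section Frenet

variable {α V₁ V₂ V₃ : ℝ → Fin 4 → ℝ} {K₁ K₂ : ℝ → ℝ} {μ₁ μ₂ μ₃ : ℝ}

theorem exists_B_sub_eq_zero_of_frenet (hK₁ : Continuous K₁) (hK₂ : Continuous K₂)
    (hα : ∀ σ, HasDerivAt α (V₁ σ) σ)
    (hV₁ : ∀ σ, HasDerivAt V₁ (K₁ σ • V₁ σ + V₂ σ) σ)
    (hV₂ : ∀ σ, HasDerivAt V₂ (μ₁ • V₁ σ + K₁ σ • V₂ σ + (μ₂ * K₂ σ) • V₃ σ) σ)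
    (hV₃ : ∀ σ, HasDerivAt V₃ ((μ₃ * K₂ σ) • V₂ σ + K₁ σ • V₃ σ) σ) :
    ∃ q ≠ 0, ∀ σ, B (α σ - α 0) q = 0 := by
  obtain ⟨q, hq, hq₀⟩ := exists_ne_zero_forall_B_eq_zero (by norm_num) ![V₁ 0, V₂ 0, V₃ 0]
  refine ⟨q, hq, (forall_B_sub_eq_zero_iff hα q).2 fun σ => ?_⟩
  exact frenet_system_eq_zero hK₁ hK₂
    (fun s => by simpa only [B_add_left, B_smul_left] using (hV₁ s).B_left q)
    (fun s => by simpa only [B_add_left, B_smul_left] using (hV₂ s).B_left q)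
    (fun s => by simpa only [B_add_left, B_smul_left] using (hV₃ s).B_left q)
    (hq₀ 0) (hq₀ 1) (hq₀ 2) σ

theorem K₃_eq_zero_of_B_sub_eq_zero {V₄ : ℝ → Fin 4 → ℝ} {K₃ : ℝ → ℝ} {μ₄ : ℝ}
    (hμ₂ : μ₂ ≠ 0) (hμ₄ : μ₄ ≠ 0) (hK₂ : ∀ σ, K₂ σ ≠ 0)
    (hα : ∀ σ, HasDerivAt α (V₁ σ) σ)
    (hV₁ : ∀ σ, HasDerivAt V₁ (K₁ σ • V₁ σ + V₂ σ) σ)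
    (hV₂ : ∀ σ, HasDerivAt V₂ (μ₁ • V₁ σ + K₁ σ • V₂ σ + (μ₂ * K₂ σ) • V₃ σ) σ)
    (hV₃ : ∀ σ, HasDerivAt V₃ ((μ₃ * K₂ σ) • V₂ σ + K₁ σ • V₃ σ + (μ₄ * K₃ σ) • V₄ σ) σ)
    {σ : ℝ} (hindep : LinearIndependent ℝ ![V₁ σ, V₂ σ, V₃ σ, V₄ σ])
    {q : Fin 4 → ℝ} (hq : q ≠ 0) (hαq : ∀ σ, B (α σ - α 0) q = 0) : K₃ σ = 0 := by
  have h₁ : ∀ s, B (V₁ s) q = 0 := (forall_B_sub_eq_zero_iff hα q).1 hαq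
  have h₂ : ∀ s, B (V₂ s) q = 0 := fun s => by
    simpa [B_add_left, B_smul_left, h₁ s] using ((hV₁ s).B_left q).eq_zero_of_forall_eq_zero h₁
  have h₃ : ∀ s, B (V₃ s) q = 0 := fun s => by
    simpa [B_add_left, B_smul_left, h₁ s, h₂ s, hμ₂, hK₂ s] using
      ((hV₂ s).B_left q).eq_zero_of_forall_eq_zero h₂
  have h₄ : K₃ σ * B (V₄ σ) q = 0 := by
    simpa [B_add_left, B_smul_left, h₂ σ, h₃ σ, hμ₄] using
      ((hV₃ σ).B_left q).eq_zero_of_forall_eq_zero h₃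
  refine (mul_eq_zero.1 h₄).resolve_right fun h₄ => hq ?_
  refine eq_zero_of_forall_B_eq_zero (hindep.span_eq_top_of_card_eq_finrank (by simp)) ?_
  intro i
  fin_cases i <;> simp [h₁, h₂, h₃, h₄]

end Frenet

theorem spacelike_K₃_zero_iff_hyperplanar_general
    (α V₁ V₂ V₃ V₄ : ℝ → Fin 4 → ℝ) (K₁ K₂ K₃ : ℝ → ℝ)
    (μ₁ μ₂ μ₃ μ₄ : ℝ)
    (hμ₂ : μ₂ = -1 ∨ μ₂ = 1)
    (hμ₄ : μ₄ = -1 ∨ μ₄ = 1)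
    (hα : ContDiff ℝ (⊤ : ℕ∞) α)
    (hV₁ : ContDiff ℝ (⊤ : ℕ∞) V₁) (hV₂ : ContDiff ℝ (⊤ : ℕ∞) V₂)
    (hV₃ : ContDiff ℝ (⊤ : ℕ∞) V₃)
    (hindep : ∀ σ, LinearIndependent ℝ ![V₁ σ, V₂ σ, V₃ σ, V₄ σ])
    (hK₁c : Continuous K₁) (hK₂c : Continuous K₂)
    (hα' : ∀ σ, deriv α σ = V₁ σ)
    (hV₁' : ∀ σ, deriv V₁ σ = K₁ σ • V₁ σ + V₂ σ)
    (hV₂' : ∀ σ, deriv V₂ σ = μ₁ • V₁ σ + K₁ σ • V₂ σ + (μ₂ * K₂ σ) • V₃ σ)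
    (hV₃' : ∀ σ, deriv V₃ σ = (μ₃ * K₂ σ) • V₂ σ + K₁ σ • V₃ σ + (μ₄ * K₃ σ) • V₄ σ)
    (hK₂ne : ∀ σ, K₂ σ ≠ 0) :
    (∀ σ, K₃ σ = 0) ↔
      ∃ q : Fin 4 → ℝ, q ≠ 0 ∧ ∀ σ, B (α σ - α 0) q = 0 := by
  have hasDerivAt_deriv {f : ℝ → Fin 4 → ℝ} (hf : ContDiff ℝ (⊤ : ℕ∞) f) (σ : ℝ) :
      HasDerivAt f (deriv f σ) σ :=
    (hf.differentiable (by simp) σ).hasDerivAt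
  have hDα σ := hα' σ ▸ hasDerivAt_deriv hα σ
  have hD₁ σ := hV₁' σ ▸ hasDerivAt_deriv hV₁ σ
  have hD₂ σ := hV₂' σ ▸ hasDerivAt_deriv hV₂ σ
  have hD₃ σ := hV₃' σ ▸ hasDerivAt_deriv hV₃ σ
  constructor
  · intro hK₃
    exact exists_B_sub_eq_zero_of_frenet hK₁c hK₂c hDα hD₁ hD₂ fun σ => by
      simpa only [hK₃, mul_zero, zero_smul, add_zero] using hD₃ σ
  · rintro ⟨q, hq, hαq⟩ σ
    have hμ₂₀ : μ₂ ≠ 0 := by rcases hμ₂ with rfl | rfl <;> norm_num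
    have hμ₄₀ : μ₄ ≠ 0 := by rcases hμ₄ with rfl | rfl <;> norm_num
    exact K₃_eq_zero_of_B_sub_eq_zero hμ₂₀ hμ₄₀ hK₂ne hDα hD₁ hD₂ hD₃ (hindep σ) hq hαq

theorem spacelike_K₃_zero_iff_hyperplanar
    (α V₁ V₂ V₃ V₄ : ℝ → Fin 4 → ℝ) (K₁ K₂ K₃ : ℝ → ℝ)
    (μ₁ μ₂ μ₃ μ₄ μ₅ : ℝ)
    (hμ₁ : μ₁ = -1 ∨ μ₁ = 1) (hμ₂ : μ₂ = -1 ∨ μ₂ = 1) (hμ₃ : μ₃ = -1 ∨ μ₃ = 1)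
    (hμ₄ : μ₄ = -1 ∨ μ₄ = 1) (hμ₅ : μ₅ = -1 ∨ μ₅ = 1)
    (hα : ContDiff ℝ (⊤ : ℕ∞) α)
    (hV₁ : ContDiff ℝ (⊤ : ℕ∞) V₁) (hV₂ : ContDiff ℝ (⊤ : ℕ∞) V₂)
    (hV₃ : ContDiff ℝ (⊤ : ℕ∞) V₃) (hV₄ : ContDiff ℝ (⊤ : ℕ∞) V₄)
    (hindep : ∀ σ, LinearIndependent ℝ ![V₁ σ, V₂ σ, V₃ σ, V₄ σ])
    (hK₁c : Continuous K₁) (hK₂c : Continuous K₂) (hK₃c : Continuous K₃)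
    (hα' : ∀ σ, deriv α σ = V₁ σ)
    (hV₁' : ∀ σ, deriv V₁ σ = K₁ σ • V₁ σ + V₂ σ)
    (hV₂' : ∀ σ, deriv V₂ σ = μ₁ • V₁ σ + K₁ σ • V₂ σ + (μ₂ * K₂ σ) • V₃ σ)
    (hV₃' : ∀ σ, deriv V₃ σ = (μ₃ * K₂ σ) • V₂ σ + K₁ σ • V₃ σ + (μ₄ * K₃ σ) • V₄ σ)
    (hV₄' : ∀ σ, deriv V₄ σ = (μ₅ * K₃ σ) • V₃ σ + K₁ σ • V₄ σ)
    (hK₁ne : ∀ σ, K₁ σ ≠ 0) (hK₂ne : ∀ σ, K₂ σ ≠ 0) :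
    (∀ σ, K₃ σ = 0) ↔
      ∃ q : Fin 4 → ℝ, q ≠ 0 ∧ ∀ σ, B (α σ - α 0) q = 0 :=
  spacelike_K₃_zero_iff_hyperplanar_general α V₁ V₂ V₃ V₄ K₁ K₂ K₃ μ₁ μ₂ μ₃ μ₄ hμ₂ hμ₄ hα hV₁ hV₂
    hV₃ hindep hK₁c hK₂c hα' hV₁' hV₂' hV₃' hK₂ne
end
end

section
/- (Theorem 4.3) Let V₁, V₂, V₃, V₄ : ℝ → ℝ⁴ be twice differentiable maps forming, at every σ, a linearly independent family, with differentiable functions 𝒦₁, 𝒦₂, 𝒦₃ : ℝ → ℝ and signs μ₁,…,μ₅ ∈ {-1,1}, satisfying the equiform Frenet equations V₁' = 𝒦₁V₁ + V₂, V₂' = μ₁V₁ + 𝒦₁V₂ + μ₂𝒦₂V₃, V₃' = μ₃𝒦₂V₂ + 𝒦₁V₃ + μ₄𝒦₃V₄, V₄' = μ₅𝒦₃V₃ + 𝒦₁V₄. Then 𝒦₂ and 𝒦₃ are constant (the curve is a general helix) if and only if, for all σ, V₃'' + ψ₁V₃ = ψ₂V₁ + ψ₃V₂ + ψ₄V₄,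 where ψ₁ = -(𝒦₁' + 𝒦₁² + μ₂μ₃𝒦₂² + μ₄μ₅𝒦₃²), ψ₂ = μ₁μ₃𝒦₂, ψ₃ = 2μ₃𝒦₁𝒦₂, ψ₄ = 2μ₄𝒦₁𝒦₃. -/
noncomputable section

/-!
Differentiating the third equiform Frenet equation and substituting the equations for `V₂'` and
`V₄'` gives `V₃'' + ψ₁ V₃ - (ψ₂ V₁ + ψ₃ V₂ + ψ₄ V₄) = μ₃ 𝒦₂' V₂ + μ₄ 𝒦₃' V₄`. Since the frame is
linearly independent and `μ₃, μ₄ ≠ 0`, the right side vanishes exactly when `𝒦₂' = 𝒦₃' = 0`,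
that is, when `𝒦₂` and `𝒦₃` are constant.
-/

theorem exists_forall_eq_iff_deriv_eq_zero {𝕜 G : Type*} [RCLike 𝕜] [NormedAddCommGroup G]
    [NormedSpace 𝕜 G] {f : 𝕜 → G} (hf : Differentiable 𝕜 f) :
    (∃ c, ∀ x, f x = c) ↔ ∀ x, deriv f x = 0 := by
  constructor
  · rintro ⟨c, hc⟩ x
    rw [funext hc, deriv_const]
  · exact fun h => ⟨f 0, fun x => is_const_of_deriv_eq_zero hf h x 0⟩

theorem LinearIndependent.smul_add_smul_eq_zero_iff_of_fin_four {R M : Type*} [Ring R]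
    [AddCommGroup M] [Module R M] {v₁ v₂ v₃ v₄ : M}
    (h : LinearIndependent R ![v₁, v₂, v₃, v₄]) {a b : R} :
    a • v₂ + b • v₄ = 0 ↔ a = 0 ∧ b = 0 := by
  have h₂₄ : LinearIndependent R ![v₂, v₄] := by
    convert h.comp ![1, 3] (by decide) using 1
    ext i
    fin_cases i <;> rfl
  refine ⟨LinearIndependent.pair_iff.mp h₂₄ a b, ?_⟩
  rintro ⟨rfl, rfl⟩
  simp

theorem frenet_deriv_deriv_third_sub {E : Type*} [NormedAddCommGroup E] [NormedSpace ℝ E]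
    {V₁ V₂ V₃ V₄ : ℝ → E} {K₁ K₂ K₃ : ℝ → ℝ} {μ₁ μ₂ μ₃ μ₄ μ₅ σ : ℝ}
    (hV₂d : DifferentiableAt ℝ V₂ σ) (hV₃d : DifferentiableAt ℝ V₃ σ)
    (hV₄d : DifferentiableAt ℝ V₄ σ) (hK₁d : DifferentiableAt ℝ K₁ σ)
    (hK₂d : DifferentiableAt ℝ K₂ σ) (hK₃d : DifferentiableAt ℝ K₃ σ)
    (hV₂' : deriv V₂ σ = μ₁ • V₁ σ + K₁ σ • V₂ σ + (μ₂ * K₂ σ) • V₃ σ)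
    (hV₃' : ∀ s, deriv V₃ s = (μ₃ * K₂ s) • V₂ s + K₁ s • V₃ s + (μ₄ * K₃ s) • V₄ s)
    (hV₄' : deriv V₄ σ = (μ₅ * K₃ σ) • V₃ σ + K₁ σ • V₄ σ) :
    deriv (deriv V₃) σ +
        (-(deriv K₁ σ + K₁ σ ^ 2 + μ₂ * μ₃ * K₂ σ ^ 2 + μ₄ * μ₅ * K₃ σ ^ 2)) • V₃ σ -
      ((μ₁ * μ₃ * K₂ σ) • V₁ σ + (2 * μ₃ * K₁ σ * K₂ σ) • V₂ σ +
        (2 * μ₄ * K₁ σ * K₃ σ) • V₄ σ) =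
      (μ₃ * deriv K₂ σ) • V₂ σ + (μ₄ * deriv K₃ σ) • V₄ σ := by
  have hV₃'' : HasDerivAt (deriv V₃)
      ((μ₃ * K₂ σ) • deriv V₂ σ + (μ₃ * deriv K₂ σ) • V₂ σ +
        (K₁ σ • deriv V₃ σ + deriv K₁ σ • V₃ σ) +
        ((μ₄ * K₃ σ) • deriv V₄ σ + (μ₄ * deriv K₃ σ) • V₄ σ)) σ := by
    convert (((hK₂d.hasDerivAt.const_mul μ₃).smul hV₂d.hasDerivAt).add
      (hK₁d.hasDerivAt.smul hV₃d.hasDerivAt)).add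
      ((hK₃d.hasDerivAt.const_mul μ₄).smul hV₄d.hasDerivAt) using 1
    exact funext hV₃'
  rw [hV₃''.deriv, hV₂', hV₃' σ, hV₄']
  module

theorem spacelike_general_helix_characterization_general
    (V₁ V₂ V₃ V₄ : ℝ → Fin 4 → ℝ) (K₁ K₂ K₃ : ℝ → ℝ)
    (μ₁ μ₂ μ₃ μ₄ μ₅ : ℝ)
    (hμ₃ : μ₃ = -1 ∨ μ₃ = 1)
    (hμ₄ : μ₄ = -1 ∨ μ₄ = 1)
    (hV₂d : Differentiable ℝ V₂)
    (hV₃d : Differentiable ℝ V₃) (hV₄d : Differentiable ℝ V₄)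
    (hindep : ∀ σ, LinearIndependent ℝ ![V₁ σ, V₂ σ, V₃ σ, V₄ σ])
    (hK₁d : Differentiable ℝ K₁) (hK₂d : Differentiable ℝ K₂)
    (hK₃d : Differentiable ℝ K₃)
    (hV₂' : ∀ σ, deriv V₂ σ = μ₁ • V₁ σ + K₁ σ • V₂ σ + (μ₂ * K₂ σ) • V₃ σ)
    (hV₃' : ∀ σ, deriv V₃ σ = (μ₃ * K₂ σ) • V₂ σ + K₁ σ • V₃ σ + (μ₄ * K₃ σ) • V₄ σ)
    (hV₄' : ∀ σ, deriv V₄ σ = (μ₅ * K₃ σ) • V₃ σ + K₁ σ • V₄ σ) :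
    ((∃ c₂, ∀ σ, K₂ σ = c₂) ∧ (∃ c₃, ∀ σ, K₃ σ = c₃)) ↔
      (∀ σ, deriv (deriv V₃) σ +
          (-(deriv K₁ σ + (K₁ σ) ^ 2 + μ₂ * μ₃ * (K₂ σ) ^ 2 + μ₄ * μ₅ * (K₃ σ) ^ 2)) • V₃ σ =
        (μ₁ * μ₃ * K₂ σ) • V₁ σ + (2 * μ₃ * K₁ σ * K₂ σ) • V₂ σ +
          (2 * μ₄ * K₁ σ * K₃ σ) • V₄ σ) := by
  have hμ₃₀ : μ₃ ≠ 0 := by rcases hμ₃ with rfl | rfl <;> norm_num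
  have hμ₄₀ : μ₄ ≠ 0 := by rcases hμ₄ with rfl | rfl <;> norm_num
  rw [exists_forall_eq_iff_deriv_eq_zero hK₂d, exists_forall_eq_iff_deriv_eq_zero hK₃d,
    ← forall_and]
  refine forall_congr' fun σ => ?_
  rw [iff_comm, ← sub_eq_zero, frenet_deriv_deriv_third_sub (hV₂d σ) (hV₃d σ) (hV₄d σ) (hK₁d σ) (hK₂d σ)
    (hK₃d σ) (hV₂' σ) hV₃' (hV₄' σ), (hindep σ).smul_add_smul_eq_zero_iff_of_fin_four,
    mul_eq_zero, mul_eq_zero, or_iff_right hμ₃₀, or_iff_right hμ₄₀]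

theorem spacelike_general_helix_characterization
    (V₁ V₂ V₃ V₄ : ℝ → Fin 4 → ℝ) (K₁ K₂ K₃ : ℝ → ℝ)
    (μ₁ μ₂ μ₃ μ₄ μ₅ : ℝ)
    (hμ₁ : μ₁ = -1 ∨ μ₁ = 1) (hμ₂ : μ₂ = -1 ∨ μ₂ = 1) (hμ₃ : μ₃ = -1 ∨ μ₃ = 1)
    (hμ₄ : μ₄ = -1 ∨ μ₄ = 1) (hμ₅ : μ₅ = -1 ∨ μ₅ = 1)
    (hV₁d : Differentiable ℝ V₁) (hV₂d : Differentiable ℝ V₂)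
    (hV₃d : Differentiable ℝ V₃) (hV₄d : Differentiable ℝ V₄)
    (hV₁d' : Differentiable ℝ (deriv V₁)) (hV₂d' : Differentiable ℝ (deriv V₂))
    (hV₃d' : Differentiable ℝ (deriv V₃)) (hV₄d' : Differentiable ℝ (deriv V₄))
    (hindep : ∀ σ, LinearIndependent ℝ ![V₁ σ, V₂ σ, V₃ σ, V₄ σ])
    (hK₁d : Differentiable ℝ K₁) (hK₂d : Differentiable ℝ K₂)
    (hK₃d : Differentiable ℝ K₃)
    (hV₁' : ∀ σ, deriv V₁ σ = K₁ σ • V₁ σ + V₂ σ)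
    (hV₂' : ∀ σ, deriv V₂ σ = μ₁ • V₁ σ + K₁ σ • V₂ σ + (μ₂ * K₂ σ) • V₃ σ)
    (hV₃' : ∀ σ, deriv V₃ σ = (μ₃ * K₂ σ) • V₂ σ + K₁ σ • V₃ σ + (μ₄ * K₃ σ) • V₄ σ)
    (hV₄' : ∀ σ, deriv V₄ σ = (μ₅ * K₃ σ) • V₃ σ + K₁ σ • V₄ σ) :
    ((∃ c₂, ∀ σ, K₂ σ = c₂) ∧ (∃ c₃, ∀ σ, K₃ σ = c₃)) ↔
      (∀ σ, deriv (deriv V₃) σ +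
          (-(deriv K₁ σ + (K₁ σ) ^ 2 + μ₂ * μ₃ * (K₂ σ) ^ 2 + μ₄ * μ₅ * (K₃ σ) ^ 2)) • V₃ σ =
        (μ₁ * μ₃ * K₂ σ) • V₁ σ + (2 * μ₃ * K₁ σ * K₂ σ) • V₂ σ +
          (2 * μ₄ * K₁ σ * K₃ σ) • V₄ σ) :=
  spacelike_general_helix_characterization_general V₁ V₂ V₃ V₄ K₁ K₂ K₃ μ₁ μ₂ μ₃ μ₄ μ₅ hμ₃ hμ₄ hV₂d
    hV₃d hV₄d hindep hK₁d hK₂d hK₃d hV₂' hV₃' hV₄'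
end
end

section
/- (Theorem 4.5) Let γ : ℝ → ℝ⁴ be smooth and let U₁, U₂, U₃, U₄ : ℝ → ℝ⁴ be smooth maps forming, at every σ, a linearly independent family, with continuous functions 𝒦̄₁, 𝒦̄₂, 𝒦̄₃ : ℝ → ℝ, such that γ' = U₁ and the timelike equiform Frenet equations hold: U₁' = 𝒦̄₁U₁ + U₂, U₂' = U₁ + 𝒦̄₁U₂ + 𝒦̄₂U₃, U₃' = -𝒦̄₂U₂ + 𝒦̄₁U₃ + 𝒦̄₃U₄, U₄' = -𝒦̄₃U₃ + 𝒦̄₁U₄. Assume 𝒦̄₁(σ) ≠ 0 and 𝒦̄₂(σ) ≠ 0 for all σ. Then 𝒦̄₃ ≡ 0 if and only if γ lies fully in a hyperplane of E₁⁴, i.e. there exists a nonzero vector q ∈ ℝ⁴ such that B(γ(σ) - γ(0), q) = 0 for all σ. -/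
/-! If `𝒦̄₃ ≡ 0`, the Frenet equations for `U₁, U₂, U₃` close up, so for any `q` the triple
`(B(U₁, q), B(U₂, q), B(U₃, q))` solves a linear ODE. Taking `q ≠ 0` orthogonal to
`U₁(0), U₂(0), U₃(0)`, uniqueness keeps the triple zero, and `B(γ - γ(0), q)` has derivative
`B(U₁, q) = 0`. Conversely, differentiating `B(γ - γ(0), q) ≡ 0` repeatedly gives
`q ⊥ U₁, U₂` and (as `𝒦̄₂ ≠ 0`) `q ⊥ U₃`, and then `𝒦̄₃ B(U₄, q) = 0`; since `B` is
nondegenerate and the `Uᵢ` form a basis, `B(U₄, q) ≠ 0`. -/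

noncomputable section

section LinearODE

variable {E : Type*} [NormedAddCommGroup E] [NormedSpace ℝ E]

theorem ODE_solution_eq_zero_of_linear {A : ℝ → E →L[ℝ] E} (hA : Continuous A) {y : ℝ → E}
    (hy : ∀ t, HasDerivAt y (A t (y t)) t) {t₀ : ℝ} (h₀ : y t₀ = 0) (t : ℝ) : y t = 0 := by
  obtain ⟨a, b, ht₀, ht⟩ : ∃ a b, t₀ ∈ Set.Ioo a b ∧ t ∈ Set.Icc a b :=
    ⟨min t t₀ - 1, max t t₀ + 1, ⟨by linarith [min_le_right t t₀], by linarith [le_max_right t t₀]⟩,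
      ⟨by linarith [min_le_left t t₀], by linarith [le_max_left t t₀]⟩⟩
  obtain ⟨C, hC⟩ := (isCompact_Icc (a := a) (b := b)).exists_bound_of_continuousOn
    hA.continuousOn
  have hlip : ∀ s ∈ Set.Ioo a b, LipschitzOnWith C.toNNReal (A s) Set.univ := fun s hs =>
    ((A s).lipschitz.weaken (by
      rw [← NNReal.coe_le_coe, coe_nnnorm, Real.coe_toNNReal']
      exact (hC s (Set.Ioo_subset_Icc_self hs)).trans (le_max_left _ _))).lipschitzOnWith
  exact ODE_solution_unique_of_mem_Icc hlip ht₀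
    (fun s _ => (hy s).continuousAt.continuousWithinAt) (fun s _ => hy s) (fun _ _ => trivial)
    continuousOn_const (fun s _ => by simpa using hasDerivAt_const s (0 : E))
    (fun _ _ => trivial) h₀ ht

theorem apply_eq_zero_of_matrix_ODE {n : ℕ} {M : ℝ → Matrix (Fin n) (Fin n) ℝ}
    (hM : Continuous M) {W : Fin n → ℝ → E}
    (hW : ∀ i t, HasDerivAt (W i) (∑ j, M t i j • W j t) t) (φ : E →L[ℝ] ℝ) {t₀ : ℝ}
    (h₀ : ∀ i, φ (W i t₀) = 0) (i : Fin n) (t : ℝ) : φ (W i t) = 0 := by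
  let A : ℝ → (Fin n → ℝ) →L[ℝ] (Fin n → ℝ) := fun s =>
    LinearMap.toContinuousLinearMap (Matrix.toLin' (M s))
  have hA : Continuous A := by
    have := LinearMap.continuous_of_finiteDimensional
      (Matrix.toLin'.trans LinearMap.toContinuousLinearMap :
        Matrix (Fin n) (Fin n) ℝ ≃ₗ[ℝ] _).toLinearMap
    exact this.comp hM
  have hy : ∀ s, HasDerivAt (fun s i => φ (W i s)) (A s (fun i => φ (W i s))) s := by
    intro s
    refine hasDerivAt_pi.2 fun i => ?_
    simpa [A, Function.comp_def, Matrix.mulVec, dotProduct] using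
      φ.hasFDerivAt.comp_hasDerivAt s (hW i s)
  exact congrFun (ODE_solution_eq_zero_of_linear hA hy (funext h₀) t) i

end LinearODE

namespace Minkowski

@[simp] lemma B_add_left (x y z : Fin 4 → ℝ) : B (x + y) z = B x z + B y z := by
  simp only [B, Pi.add_apply]; ring

@[simp] lemma B_smul_left (c : ℝ) (x z : Fin 4 → ℝ) : B (c • x) z = c * B x z := by
  simp only [B, Pi.smul_apply, smul_eq_mul]; ring

@[simp] lemma B_neg_left (x z : Fin 4 → ℝ) : B (-x) z = -B x z := by
  simp only [B, Pi.neg_apply]; ring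

lemma B_comm (x y : Fin 4 → ℝ) : B x y = B y x := by
  simp only [B]; ring

def bilinForm : LinearMap.BilinForm ℝ (Fin 4 → ℝ) :=
  LinearMap.mk₂ ℝ B B_add_left B_smul_left
    (fun x y z => by rw [B_comm, B_add_left, B_comm y, B_comm z])
    (fun c x z => by rw [B_comm, B_smul_left, B_comm, smul_eq_mul])

@[simp] lemma bilinForm_apply (x y : Fin 4 → ℝ) : bilinForm x y = B x y := rfl

def pairing (q : Fin 4 → ℝ) : (Fin 4 → ℝ) →L[ℝ] ℝ :=
  LinearMap.toContinuousLinearMap (bilinForm.flip q)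

@[simp] lemma pairing_apply (q x : Fin 4 → ℝ) : pairing q x = B x q := rfl

lemma eq_zero_of_forall_B_eq_zero {q : Fin 4 → ℝ} (h : ∀ x, B x q = 0) : q = 0 := by
  funext i
  have := h (Pi.single i 1)
  fin_cases i <;> simpa [B] using this

lemma eq_zero_of_B_eq_zero_of_linearIndependent {v : Fin 4 → Fin 4 → ℝ}
    (hv : LinearIndependent ℝ v) {q : Fin 4 → ℝ} (h : ∀ i, B (v i) q = 0) : q = 0 := by
  have hspan := hv.span_eq_top_of_card_eq_finrank (by simp)
  refine eq_zero_of_forall_B_eq_zero fun x => ?_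
  simpa using LinearMap.congr_fun 
    (LinearMap.ext_on_range hspan (f := bilinForm.flip q) (g := 0) h) x

lemma exists_ne_zero_B_eq_zero {n : ℕ} (hn : n < 4) (v : Fin n → Fin 4 → ℝ) :
    ∃ q ≠ 0, ∀ i, B (v i) q = 0 := by
  have hker := LinearMap.ker_ne_bot_of_finrank_lt (f := LinearMap.pi fun i => bilinForm (v i))
    (by simpa using hn)
  obtain ⟨q, hq, hq0⟩ := (Submodule.ne_bot_iff _).1 hker
  exact ⟨q, hq0, fun i => by simpa using congrFun (LinearMap.mem_ker.1 hq) i⟩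

lemma hasDerivAt_B_left {U : ℝ → Fin 4 → ℝ} {U' : Fin 4 → ℝ} {t : ℝ} (hU : HasDerivAt U U' t)
    (q : Fin 4 → ℝ) : HasDerivAt (fun s => B (U s) q) (B U' q) t :=
  (pairing q).hasFDerivAt.comp_hasDerivAt t hU

lemma B_eq_zero_of_hasDerivAt {U : ℝ → Fin 4 → ℝ} {U' : Fin 4 → ℝ} {t : ℝ}
    (hU : HasDerivAt U U' t) {q : Fin 4 → ℝ} (h : ∀ s, B (U s) q = 0) : B U' q = 0 := by
  have := hasDerivAt_B_left hU q
  simp only [h] at this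
  exact this.unique (hasDerivAt_const t 0)

lemma B_sub_eq_zero_iff {γ U : ℝ → Fin 4 → ℝ} (dγ : ∀ t, HasDerivAt γ (U t) t) (q : Fin 4 → ℝ) :
    (∀ σ, B (γ σ - γ 0) q = 0) ↔ ∀ t, B (U t) q = 0 := by
  constructor
  · exact fun h t => B_eq_zero_of_hasDerivAt ((dγ t).sub_const (γ 0)) h
  · intro h σ
    have d : ∀ t, HasDerivAt (fun s => B (γ s - γ 0) q) 0 t := fun t =>
      h t ▸ hasDerivAt_B_left ((dγ t).sub_const (γ 0)) q
    rw [is_const_of_deriv_eq_zero (fun t => (d t).differentiableAt) (fun t => (d t).deriv) σ 0,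
      sub_self]
    simp [B]

end Minkowski

open Minkowski

namespace TimelikeFrenet

variable {U₁ U₂ U₃ U₄ : ℝ → Fin 4 → ℝ} {K₁ K₂ K₃ : ℝ → ℝ}

-- The coefficients of `(U₁, U₂, U₃)'` in the Frenet equations when `𝒦̄₃ = 0`.
def frenetMatrix₃ (k₁ k₂ : ℝ) : Matrix (Fin 3) (Fin 3) ℝ :=
  !![k₁, 1, 0; 1, k₁, k₂; 0, -k₂, k₁]

theorem exists_orthogonal_of_K₃_eq_zero (hK₁ : Continuous K₁) (hK₂ : Continuous K₂)
    (dU₁ : ∀ t, HasDerivAt U₁ (K₁ t • U₁ t + U₂ t) t)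
    (dU₂ : ∀ t, HasDerivAt U₂ (U₁ t + K₁ t • U₂ t + K₂ t • U₃ t) t)
    (dU₃ : ∀ t, HasDerivAt U₃ (-(K₂ t • U₂ t) + K₁ t • U₃ t) t) :
    ∃ q ≠ 0, ∀ t, B (U₁ t) q = 0 := by
  obtain ⟨q, hq, h₀⟩ := exists_ne_zero_B_eq_zero (by norm_num) fun i => ![U₁, U₂, U₃] i 0
  have hM : Continuous fun t => frenetMatrix₃ (K₁ t) (K₂ t) := by
    refine continuous_pi fun i => continuous_pi fun j => ?_
    fin_cases i <;> fin_cases j <;> simp [frenetMatrix₃] <;> fun_prop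
  have hW : ∀ i t, HasDerivAt (![U₁, U₂, U₃] i)
      (∑ j, frenetMatrix₃ (K₁ t) (K₂ t) i j • ![U₁, U₂, U₃] j t) t := by
    intro i t
    fin_cases i
    · simpa [frenetMatrix₃, Fin.sum_univ_three] using dU₁ t
    · simpa [frenetMatrix₃, Fin.sum_univ_three] using dU₂ t
    · simpa [frenetMatrix₃, Fin.sum_univ_three] using dU₃ t
  exact ⟨q, hq, apply_eq_zero_of_matrix_ODE hM hW (pairing q) (t₀ := 0) h₀ 0⟩

theorem K₃_eq_zero_of_orthogonal (hindep : ∀ t, LinearIndependent ℝ ![U₁ t, U₂ t, U₃ t, U₄ t])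
    (hK₂ : ∀ t, K₂ t ≠ 0)
    (dU₁ : ∀ t, HasDerivAt U₁ (K₁ t • U₁ t + U₂ t) t)
    (dU₂ : ∀ t, HasDerivAt U₂ (U₁ t + K₁ t • U₂ t + K₂ t • U₃ t) t)
    (dU₃ : ∀ t, HasDerivAt U₃ (-(K₂ t • U₂ t) + K₁ t • U₃ t + K₃ t • U₄ t) t)
    {q : Fin 4 → ℝ} (hq : q ≠ 0) (h₁ : ∀ t, B (U₁ t) q = 0) (t : ℝ) : K₃ t = 0 := by
  have h₂ : ∀ t, B (U₂ t) q = 0 := fun t => by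
    simpa [h₁] using B_eq_zero_of_hasDerivAt (dU₁ t) h₁
  have h₃ : ∀ t, B (U₃ t) q = 0 := fun t => by
    simpa [h₁, h₂, hK₂] using B_eq_zero_of_hasDerivAt (dU₂ t) h₂
  have h₄ : K₃ t * B (U₄ t) q = 0 := by
    simpa [h₂, h₃] using B_eq_zero_of_hasDerivAt (dU₃ t) h₃
  refine (mul_eq_zero.1 h₄).resolve_right fun h₄ => hq ?_
  exact eq_zero_of_B_eq_zero_of_linearIndependent (hindep t) fun i => by
    fin_cases i <;> simp [h₁, h₂, h₃, h₄]

end TimelikeFrenet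

open TimelikeFrenet in
theorem timelike_K₃_zero_iff_hyperplanar_general
    (γ U₁ U₂ U₃ U₄ : ℝ → Fin 4 → ℝ) (K₁ K₂ K₃ : ℝ → ℝ)
    (hγ : ContDiff ℝ (⊤ : ℕ∞) γ)
    (hU₁ : ContDiff ℝ (⊤ : ℕ∞) U₁) (hU₂ : ContDiff ℝ (⊤ : ℕ∞) U₂)
    (hU₃ : ContDiff ℝ (⊤ : ℕ∞) U₃)
    (hindep : ∀ σ, LinearIndependent ℝ ![U₁ σ, U₂ σ, U₃ σ, U₄ σ])
    (hK₁c : Continuous K₁) (hK₂c : Continuous K₂)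
    (hγ' : ∀ σ, deriv γ σ = U₁ σ)
    (hU₁' : ∀ σ, deriv U₁ σ = K₁ σ • U₁ σ + U₂ σ)
    (hU₂' : ∀ σ, deriv U₂ σ = U₁ σ + K₁ σ • U₂ σ + K₂ σ • U₃ σ)
    (hU₃' : ∀ σ, deriv U₃ σ = -(K₂ σ • U₂ σ) + K₁ σ • U₃ σ + K₃ σ • U₄ σ)
    (hK₂ne : ∀ σ, K₂ σ ≠ 0) :
    (∀ σ, K₃ σ = 0) ↔
      ∃ q : Fin 4 → ℝ, q ≠ 0 ∧ ∀ σ, B (γ σ - γ 0) q = 0 := by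
  have dγ t : HasDerivAt γ (U₁ t) t := hγ' t ▸ (hγ.differentiable (by simp) t).hasDerivAt
  have dU₁ t : HasDerivAt U₁ _ t := hU₁' t ▸ (hU₁.differentiable (by simp) t).hasDerivAt
  have dU₂ t : HasDerivAt U₂ _ t := hU₂' t ▸ (hU₂.differentiable (by simp) t).hasDerivAt
  have dU₃ t : HasDerivAt U₃ _ t := hU₃' t ▸ (hU₃.differentiable (by simp) t).hasDerivAt
  simp_rw [B_sub_eq_zero_iff dγ]
  constructor
  · intro hK₃
    exact exists_orthogonal_of_K₃_eq_zero hK₁c hK₂c dU₁ dU₂ fun t => by simpa [hK₃] using dU₃ t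
  · rintro ⟨q, hq, h₁⟩
    exact K₃_eq_zero_of_orthogonal hindep hK₂ne dU₁ dU₂ dU₃ hq h₁

theorem timelike_K₃_zero_iff_hyperplanar
    (γ U₁ U₂ U₃ U₄ : ℝ → Fin 4 → ℝ) (K₁ K₂ K₃ : ℝ → ℝ)
    (hγ : ContDiff ℝ (⊤ : ℕ∞) γ)
    (hU₁ : ContDiff ℝ (⊤ : ℕ∞) U₁) (hU₂ : ContDiff ℝ (⊤ : ℕ∞) U₂)
    (hU₃ : ContDiff ℝ (⊤ : ℕ∞) U₃) (hU₄ : ContDiff ℝ (⊤ : ℕ∞) U₄)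
    (hindep : ∀ σ, LinearIndependent ℝ ![U₁ σ, U₂ σ, U₃ σ, U₄ σ])
    (hK₁c : Continuous K₁) (hK₂c : Continuous K₂) (hK₃c : Continuous K₃)
    (hγ' : ∀ σ, deriv γ σ = U₁ σ)
    (hU₁' : ∀ σ, deriv U₁ σ = K₁ σ • U₁ σ + U₂ σ)
    (hU₂' : ∀ σ, deriv U₂ σ = U₁ σ + K₁ σ • U₂ σ + K₂ σ • U₃ σ)
    (hU₃' : ∀ σ, deriv U₃ σ = -(K₂ σ • U₂ σ) + K₁ σ • U₃ σ + K₃ σ • U₄ σ)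
    (hU₄' : ∀ σ, deriv U₄ σ = -(K₃ σ • U₃ σ) + K₁ σ • U₄ σ)
    (hK₁ne : ∀ σ, K₁ σ ≠ 0) (hK₂ne : ∀ σ, K₂ σ ≠ 0) :
    (∀ σ, K₃ σ = 0) ↔
      ∃ q : Fin 4 → ℝ, q ≠ 0 ∧ ∀ σ, B (γ σ - γ 0) q = 0 :=
  timelike_K₃_zero_iff_hyperplanar_general γ U₁ U₂ U₃ U₄ K₁ K₂ K₃ hγ hU₁ hU₂ hU₃ hindep hK₁c hK₂c
    hγ' hU₁' hU₂' hU₃' hK₂ne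
end
end

section
/- (Theorem 4.6) Let U₁, U₂, U₃, U₄ : ℝ → ℝ⁴ be twice differentiable maps forming, at every σ, a linearly independent family, with differentiable functions 𝒦̄₁, 𝒦̄₂, 𝒦̄₃ : ℝ → ℝ, satisfying the timelike equiform Frenet equations U₁' = 𝒦̄₁U₁ + U₂, U₂' = U₁ + 𝒦̄₁U₂ + 𝒦̄₂U₃, U₃' = -𝒦̄₂U₂ + 𝒦̄₁U₃ + 𝒦̄₃U₄, U₄' = -𝒦̄₃U₃ + 𝒦̄₁U₄. Then 𝒦̄₂ and 𝒦̄₃ are constant (the curve is a general helix) if and only if, for all σ, U₃'' + φ₁U₃ = φ₂U₁ + φ₃U₂ + φ₄U₄, where φ₁ = -𝒦̄₁' - 𝒦̄₁² + 𝒦̄₂² + 𝒦̄₃², φ₂ = -𝒦̄₂, φ₃ = -2𝒦̄₁𝒦̄₂, φ₄ = 2𝒦̄₁𝒦̄₃. -/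
noncomputable section

theorem timelike_general_helix_characterization
    (U₁ U₂ U₃ U₄ : ℝ → Fin 4 → ℝ) (K₁ K₂ K₃ : ℝ → ℝ)
    (hU₁d : Differentiable ℝ U₁) (hU₂d : Differentiable ℝ U₂)
    (hU₃d : Differentiable ℝ U₃) (hU₄d : Differentiable ℝ U₄)
    (hU₁d' : Differentiable ℝ (deriv U₁)) (hU₂d' : Differentiable ℝ (deriv U₂))
    (hU₃d' : Differentiable ℝ (deriv U₃)) (hU₄d' : Differentiable ℝ (deriv U₄))
    (hindep : ∀ σ, LinearIndependent ℝ ![U₁ σ, U₂ σ, U₃ σ, U₄ σ])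
    (hK₁d : Differentiable ℝ K₁) (hK₂d : Differentiable ℝ K₂)
    (hK₃d : Differentiable ℝ K₃)
    (hU₁' : ∀ σ, deriv U₁ σ = K₁ σ • U₁ σ + U₂ σ)
    (hU₂' : ∀ σ, deriv U₂ σ = U₁ σ + K₁ σ • U₂ σ + K₂ σ • U₃ σ)
    (hU₃' : ∀ σ, deriv U₃ σ = -(K₂ σ • U₂ σ) + K₁ σ • U₃ σ + K₃ σ • U₄ σ)
    (hU₄' : ∀ σ, deriv U₄ σ = -(K₃ σ • U₃ σ) + K₁ σ • U₄ σ) :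
    ((∃ c₂, ∀ σ, K₂ σ = c₂) ∧ (∃ c₃, ∀ σ, K₃ σ = c₃)) ↔
      (∀ σ, deriv (deriv U₃) σ +
          (-(deriv K₁ σ) - (K₁ σ) ^ 2 + (K₂ σ) ^ 2 + (K₃ σ) ^ 2) • U₃ σ =
        (-(K₂ σ)) • U₁ σ + (-(2 * K₁ σ * K₂ σ)) • U₂ σ + (2 * K₁ σ * K₃ σ) • U₄ σ) := by
  -- second derivative of U₃
  have hderiv : ∀ σ, deriv (deriv U₃) σ =
      (-(K₂ σ)) • U₁ σ + (-(deriv K₂ σ) - 2 * K₁ σ * K₂ σ) • U₂ σ +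
      (deriv K₁ σ + (K₁ σ)^2 - (K₂ σ)^2 - (K₃ σ)^2) • U₃ σ +
      (deriv K₃ σ + 2 * K₁ σ * K₃ σ) • U₄ σ := by
    intro σ
    have h2 := (hU₂d σ).hasDerivAt
    have h3 := (hU₃d σ).hasDerivAt
    have h4 := (hU₄d σ).hasDerivAt
    have hk1 := (hK₁d σ).hasDerivAt
    have hk2 := (hK₂d σ).hasDerivAt
    have hk3 := (hK₃d σ).hasDerivAt
    have hD : HasDerivAt (fun t => -(K₂ t • U₂ t) + K₁ t • U₃ t + K₃ t • U₄ t)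
        (-(K₂ σ • deriv U₂ σ + deriv K₂ σ • U₂ σ) +
          (K₁ σ • deriv U₃ σ + deriv K₁ σ • U₃ σ) +
          (K₃ σ • deriv U₄ σ + deriv K₃ σ • U₄ σ)) σ :=
      ((hk2.smul h2).neg.add (hk1.smul h3)).add (hk3.smul h4)
    have hEq : deriv U₃ = fun t => -(K₂ t • U₂ t) + K₁ t • U₃ t + K₃ t • U₄ t :=
      funext hU₃'
    rw [hEq, hD.deriv, hU₂' σ, hU₃' σ, hU₄' σ]
    module
  have key : ∀ σ,
      (deriv (deriv U₃) σ +
          (-(deriv K₁ σ) - (K₁ σ) ^ 2 + (K₂ σ) ^ 2 + (K₃ σ) ^ 2) • U₃ σ =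
        (-(K₂ σ)) • U₁ σ + (-(2 * K₁ σ * K₂ σ)) • U₂ σ + (2 * K₁ σ * K₃ σ) • U₄ σ)
      ↔ (deriv K₂ σ = 0 ∧ deriv K₃ σ = 0) := by
    intro σ
    rw [hderiv σ]
    constructor
    · intro heq
      have hz : (0:ℝ) • U₁ σ + (-(deriv K₂ σ)) • U₂ σ + (0:ℝ) • U₃ σ +
          (deriv K₃ σ) • U₄ σ = 0 := by
        have := sub_eq_zero_of_eq heq
        rw [← this]
        module
      have hli := Fintype.linearIndependent_iff.mp (hindep σ)
        ![0, -(deriv K₂ σ), 0, deriv K₃ σ]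
      have hsum : ∑ i, (![0, -(deriv K₂ σ), 0, deriv K₃ σ]) i •
          (![U₁ σ, U₂ σ, U₃ σ, U₄ σ]) i = 0 := by
        simpa [Fin.sum_univ_four] using hz
      have h1 := hli hsum 1
      have h3 := hli hsum 3
      simp at h1 h3
      exact ⟨h1, h3⟩
    · rintro ⟨h2, h3⟩
      rw [h2, h3]
      module
  constructor
  · rintro ⟨⟨c₂, h₂⟩, ⟨c₃, h₃⟩⟩ σ
    rw [key σ]
    constructor
    · have : K₂ = fun _ => c₂ := funext h₂
      rw [this]; simp
    · have : K₃ = fun _ => c₃ := funext h₃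
      rw [this]; simp
  · intro heq
    have hz : ∀ σ, deriv K₂ σ = 0 ∧ deriv K₃ σ = 0 := fun σ => (key σ).mp (heq σ)
    constructor
    · exact ⟨K₂ 0, fun σ => is_const_of_deriv_eq_zero hK₂d (fun x => (hz x).1) σ 0⟩
    · exact ⟨K₃ 0, fun σ => is_const_of_deriv_eq_zero hK₃d (fun x => (hz x).2) σ 0⟩
end
end
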